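/- For all integers n ≥ 2 and 1 ≤ j ≤ n, the polynomial identity P_n^{(j)}(y_1,…,y_{n−1}) = Σ_{k=0}^{n−j} (y_1^k / k!) · P_{n−1}^{(k+j−1)}(y_2,…,y_{n−1}) holds, where by convention P_m^{(0)} = 0 for m ≥ 1. -/

import Mathlib

/-- A path of length `2n` is encoded by `w : Fin (2*n) → Bool`, where `true` stands for a step
`(1,1)` and `false` for a step `(1,-1)`. `upCount n w m` is the number of up-steps among the
first `m` steps; the height of the path after `m` steps is `2 * upCount n w m - m`. -/
def upCount (n : ℕ) (w : Fin (2 * n) → Bool) (m : ℕ) : ℕ :=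
  (Finset.univ.filter (fun p : Fin (2 * n) => (p : ℕ) < m ∧ w p = true)).card

/-- `w` encodes a Dyck path of length `2n`: starts at `(0,0)`, ends at `(2n,0)`, stays weakly
above the x-axis. -/
def IsDyckPath (n : ℕ) (w : Fin (2 * n) → Bool) : Prop :=
  (∀ m ≤ 2 * n, m ≤ 2 * upCount n w m) ∧ upCount n w (2 * n) = n

open Classical in
/-- The finite set `𝒟_n` of Dyck paths of length `2n`. -/
noncomputable def dyckPaths (n : ℕ) : Finset (Fin (2 * n) → Bool) :=
  Finset.univ.filter (fun w => IsDyckPath n w)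

/-- `alpha n w j + 1` is the number of lattice points common to the path `w` and the line
`y = x - 2j`, i.e. the number of `m ∈ {0, …, 2n}` with height `2 * upCount n w m - m = m - 2j`,
equivalently `upCount n w m + j = m`. -/
def alpha (n : ℕ) (w : Fin (2 * n) → Bool) (j : ℕ) : ℕ :=
  ((Finset.range (2 * n + 1)).filter (fun m => upCount n w m + j = m)).card - 1

/-- The Dyck polynomial `P_n(y_0, …, y_{n-1}) = Σ_{π ∈ 𝒟_n} Π_{i=0}^{n-1} y_i^{α_i(π)}/α_i(π)!`
(the argument `y : ℕ → ℝ` is only used through its first `n` values; `P_0 = 1`). -/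
noncomputable def Ppoly (n : ℕ) (y : ℕ → ℝ) : ℝ :=
  ∑ w ∈ dyckPaths n, ∏ i ∈ Finset.range n, y i ^ alpha n w i / (alpha n w i).factorial

/-- The Dyck polynomial `R_n(y_0, …, y_{n-1}) = Σ_{π ∈ 𝒟_n} Π_{i=0}^{n-1} y_i^{α_i(π)}`. -/
noncomputable def Rpoly (n : ℕ) (y : ℕ → ℝ) : ℝ :=
  ∑ w ∈ dyckPaths n, ∏ i ∈ Finset.range n, y i ^ alpha n w i

/-- The one-variable Dyck polynomial `𝓡_n^{(i)}(z) = Σ_{π ∈ 𝒟_n} z^{α_i(π)+1}`. -/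
noncomputable def calR (n i : ℕ) (z : ℝ) : ℝ :=
  ∑ w ∈ dyckPaths n, z ^ (alpha n w i + 1)

/-- `𝒟_n^{(i)}`: the path starts with exactly `i` up-steps followed by a down-step. -/
def startsWithUps (n i : ℕ) (w : Fin (2 * n) → Bool) : Prop :=
  ∀ p : Fin (2 * n), ((p : ℕ) < i → w p = true) ∧ ((p : ℕ) = i → w p = false)

open Classical in
/-- The polynomial `P_n^{(i)}(y_1, …, y_{n-1})` defined by
`Σ_{π ∈ 𝒟_n^{(i)}} P_π(y_0,…,y_{n-1}) = (y_0^i/i!) · P_n^{(i)}(y_1,…,y_{n-1})`. Since every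
`π ∈ 𝒟_n^{(i)}` satisfies `α_0(π) = i`, this means
`P_n^{(i)}(y_1,…,y_{n-1}) = Σ_{π ∈ 𝒟_n^{(i)}} Π_{j=1}^{n-1} y_j^{α_j(π)}/α_j(π)!`
(the argument `y : ℕ → ℝ` is only used through the values `y 1, …, y (n-1)`). -/
noncomputable def PpolyUp (n i : ℕ) (y : ℕ → ℝ) : ℝ :=
  ∑ w ∈ (dyckPaths n).filter (fun w => startsWithUps n i w),
    ∏ j ∈ Finset.Ico 1 n, y j ^ alpha n w j / (alpha n w j).factorial


/-!
Let `j = i + 1`. A path in `𝒟_n^{(j)}` begins `U^{i+1} D`; erasing the peak `U D` at positions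
`i, i + 1` gives a Dyck path of length `2(n-1)` that begins with at least `i` up-steps, and
inserting a peak at position `i` undoes this. The points of the big path right of the peak are
those of the small path moved by `(2, 0)`, while the points left of it lie on `y = x`; hence
`α_{l+1}` of the big path is `α_l` of the small one for `l ≥ 1`, and if the small path begins
with exactly `k + i` up-steps, its diagonal points at abscissae `i, …, i + k` become the `k + 1`
points of the big path on `y = x - 2`, so `α_1 = k`.
-/

open Finset

section Words

variable {m : ℕ}

def extendWord (w : Fin m → Bool) (q : ℕ) : Bool :=
  if h : q < m then w ⟨q, h⟩ else false

@[simp]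
lemma extendWord_val (w : Fin m → Bool) (p : Fin m) : extendWord w p = w p := by
  simp [extendWord]

lemma extendWord_of_lt (w : Fin m → Bool) {q : ℕ} (h : q < m) : extendWord w q = w ⟨q, h⟩ :=
  dif_pos h

lemma extendWord_of_le (w : Fin m → Bool) {q : ℕ} (h : m ≤ q) : extendWord w q = false := by
  simp [extendWord, not_lt.2 h]

end Words

section UpCount

variable {n : ℕ} (w : Fin (2 * n) → Bool)

lemma upCount_eq_count (k : ℕ) :
    upCount n w k = Nat.count (fun q => extendWord w q = true) k := by
  rw [Nat.count_eq_card_filter_range, upCount]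
  refine card_bij (fun p _ => (p : ℕ)) (fun p hp => by simp_all) (fun _ _ _ _ => Fin.ext) ?_
  intro q hq
  simp only [mem_filter, mem_range] at hq
  have hq2 : q < 2 * n := by
    by_contra h
    simp [extendWord_of_le w (not_lt.1 h)] at hq
  exact ⟨⟨q, hq2⟩, by simpa [extendWord_of_lt w hq2] using hq, rfl⟩

lemma upCount_zero : upCount n w 0 = 0 := by
  simp [upCount_eq_count]

lemma upCount_succ (k : ℕ) :
    upCount n w (k + 1) = upCount n w k + if extendWord w k = true then 1 else 0 := by
  simp only [upCount_eq_count, Nat.count_succ]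

lemma upCount_mono : Monotone (upCount n w) := by
  simpa only [Monotone, upCount_eq_count] using Nat.count_monotone _

lemma upCount_eq_self_iff {k : ℕ} : upCount n w k = k ↔ ∀ q < k, extendWord w q = true := by
  rw [upCount_eq_count, Nat.count_iff_forall]

variable {w}

lemma startsWithUps_iff {i : ℕ} (hi : i < 2 * n) :
    startsWithUps n i w ↔ (∀ q < i, extendWord w q = true) ∧ extendWord w i = false := by
  constructor
  · intro h
    refine ⟨fun q hq => ?_, ?_⟩
    · rw [extendWord_of_lt w (by omega)]
      exact (h _).1 hq
    · rw [extendWord_of_lt w hi]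
      exact (h _).2 rfl
  · rintro ⟨hup, hdown⟩ p
    refine ⟨fun hp => by simpa using hup p hp, fun hp => ?_⟩
    rw [← hp] at hdown
    simpa using hdown

lemma upCount_eq_self_iff_of_startsWithUps {i k : ℕ} (hi : i < 2 * n)
    (hw : startsWithUps n i w) : upCount n w k = k ↔ k ≤ i := by
  obtain ⟨hup, hdown⟩ := (startsWithUps_iff hi).1 hw
  rw [upCount_eq_self_iff]
  refine ⟨fun h => ?_, fun hk q hq => hup q (by omega)⟩
  by_contra hk
  simp [h i (by omega)] at hdown

lemma le_of_startsWithUps (hn : 1 ≤ n) (hw : IsDyckPath n w) {i : ℕ}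
    (h : startsWithUps n i w) : i ≤ n := by
  by_cases hi : i < 2 * n
  · have hup : upCount n w i = i := (upCount_eq_self_iff_of_startsWithUps hi h).2 le_rfl
    have := upCount_mono w (show i ≤ 2 * n by omega)
    have := hw.2
    omega
  · have : upCount n w (2 * n) = 2 * n :=
      (upCount_eq_self_iff w).2 fun q hq => by
        rw [extendWord_of_lt w hq]
        exact (h _).1 (by omega)
    have := hw.2
    omega

lemma exists_startsWithUps (hn : 1 ≤ n) (hw : IsDyckPath n w) : ∃ i, startsWithUps n i w := by
  have hex : ∃ q, extendWord w q = false := ⟨2 * n, extendWord_of_le w le_rfl⟩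
  have hup : ∀ q < Nat.find hex, extendWord w q = true := fun q hq => by
    simpa using Nat.find_min hex hq
  have hlt : Nat.find hex < 2 * n := by
    by_contra h
    have : upCount n w (2 * n) = 2 * n := (upCount_eq_self_iff w).2 fun q hq => hup q (by omega)
    have := hw.2
    omega
  exact ⟨_, (startsWithUps_iff hlt).2 ⟨hup, Nat.find_spec hex⟩⟩

end UpCount

section Peaks

variable {N i : ℕ}

def insertPeak (i : ℕ) (w : Fin (2 * N) → Bool) : Fin (2 * (N + 1)) → Bool := fun p =>
  if (p : ℕ) < i then extendWord w p
  else if (p : ℕ) = i then true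
  else if (p : ℕ) = i + 1 then false
  else extendWord w (p - 2)

def erasePeak (i : ℕ) (w : Fin (2 * (N + 1)) → Bool) : Fin (2 * N) → Bool := fun p =>
  extendWord w (if (p : ℕ) < i then p else p + 2)

lemma extendWord_insertPeak (hi : i ≤ 2 * N) (w : Fin (2 * N) → Bool) (q : ℕ) :
    extendWord (insertPeak i w) q =
      if q < i then extendWord w q
      else if q = i then true
      else if q = i + 1 then false
      else extendWord w (q - 2) := by
  by_cases hq : q < 2 * (N + 1)
  · rw [extendWord, dif_pos hq]
    rfl
  · rw [extendWord_of_le _ (not_lt.1 hq), if_neg (by omega), if_neg (by omega), if_neg (by omega),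
      extendWord_of_le _ (by omega)]

lemma extendWord_erasePeak (hi : i ≤ 2 * N) (w : Fin (2 * (N + 1)) → Bool) (q : ℕ) :
    extendWord (erasePeak i w) q = extendWord w (if q < i then q else q + 2) := by
  by_cases hq : q < 2 * N
  · rw [extendWord, dif_pos hq]
    rfl
  · rw [extendWord_of_le _ (not_lt.1 hq), if_neg (by omega), extendWord_of_le _ (by omega)]

lemma erasePeak_insertPeak (hi : i ≤ 2 * N) (w : Fin (2 * N) → Bool) :
    erasePeak i (insertPeak i w) = w := by
  funext p
  simp only [erasePeak, extendWord_insertPeak hi]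
  split_ifs <;> first | omega | simp

lemma insertPeak_erasePeak (hi : i ≤ 2 * N) {w : Fin (2 * (N + 1)) → Bool}
    (hw : startsWithUps (N + 1) (i + 1) w) : insertPeak i (erasePeak i w) = w := by
  funext p
  simp only [insertPeak, extendWord_erasePeak hi]
  split_ifs with h₁ h₂ h₃ <;> first | omega | skip
  · simp
  · exact ((hw p).1 (by omega)).symm
  · exact ((hw p).2 h₃).symm
  · rw [show (p : ℕ) - 2 + 2 = p by omega, extendWord_val]

lemma extendWord_erasePeak_of_lt (hi : i ≤ 2 * N) {w : Fin (2 * (N + 1)) → Bool}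
    (hw : startsWithUps (N + 1) (i + 1) w) {q : ℕ} (hq : q < i) :
    extendWord (erasePeak i w) q = true := by
  rw [extendWord_erasePeak hi, if_pos hq]
  exact ((startsWithUps_iff (by omega)).1 hw).1 q (by omega)

variable {w : Fin (2 * N) → Bool}

lemma extendWord_insertPeak_of_le (hi : i ≤ 2 * N) (hw : ∀ q < i, extendWord w q = true)
    {q : ℕ} (hq : q ≤ i) : extendWord (insertPeak i w) q = true := by
  rw [extendWord_insertPeak hi]
  split_ifs with h <;> first | exact hw q h | rfl | omega

lemma startsWithUps_insertPeak (hi : i ≤ 2 * N) (hw : ∀ q < i, extendWord w q = true) :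
    startsWithUps (N + 1) (i + 1) (insertPeak i w) :=
  (startsWithUps_iff (by omega)).2
    ⟨fun _ hq => extendWord_insertPeak_of_le hi hw (by omega), by simp [extendWord_insertPeak hi]⟩

lemma upCount_insertPeak_of_le (hi : i ≤ 2 * N) {m : ℕ} (hm : m ≤ i) :
    upCount (N + 1) (insertPeak i w) m = upCount N w m := by
  induction m with
  | zero => simp only [upCount_zero]
  | succ m ih =>
    simp only [upCount_succ, ih (by omega), extendWord_insertPeak hi, if_pos (show m < i by omega)]

lemma upCount_insertPeak_succ (hi : i ≤ 2 * N) :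
    upCount (N + 1) (insertPeak i w) (i + 1) = upCount N w i + 1 := by
  rw [upCount_succ, upCount_insertPeak_of_le hi le_rfl, extendWord_insertPeak hi]
  simp

lemma upCount_insertPeak_add_two (hi : i ≤ 2 * N) {m : ℕ} (hm : i ≤ m) :
    upCount (N + 1) (insertPeak i w) (m + 2) = upCount N w m + 1 := by
  induction m, hm using Nat.le_induction with
  | base =>
    rw [upCount_succ, upCount_insertPeak_succ hi, extendWord_insertPeak hi]
    simp
  | succ m hm ih =>
    have hm2 : ¬ m + 2 < i ∧ m + 2 ≠ i ∧ m + 2 ≠ i + 1 := by omega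
    rw [show m + 1 + 2 = m + 2 + 1 by ring, upCount_succ, ih, upCount_succ,
      extendWord_insertPeak hi]
    simp only [hm2, if_false, Nat.add_sub_cancel]
    ring

lemma isDyckPath_insertPeak_iff (hi : i ≤ 2 * N) :
    IsDyckPath (N + 1) (insertPeak i w) ↔ IsDyckPath N w := by
  have hend := upCount_insertPeak_add_two (w := w) hi hi
  rw [show 2 * N + 2 = 2 * (N + 1) by ring] at hend
  constructor
  · rintro ⟨hP, hPend⟩
    refine ⟨fun m hm => ?_, by omega⟩
    rcases le_total m i with h | h
    · rw [← upCount_insertPeak_of_le hi h]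
      exact hP m (by omega)
    · have := hP (m + 2) (by omega)
      rw [upCount_insertPeak_add_two hi h] at this
      omega
  · rintro ⟨hW, hWend⟩
    refine ⟨fun m hm => ?_, by omega⟩
    rcases lt_trichotomy m (i + 1) with h | rfl | h
    · rw [upCount_insertPeak_of_le hi (by omega)]
      exact hW m (by omega)
    · rw [upCount_insertPeak_succ hi]
      have := hW i hi
      omega
    · obtain ⟨m, rfl⟩ := Nat.exists_eq_add_of_le' (show 2 ≤ m by omega)
      rw [upCount_insertPeak_add_two hi (by omega)]
      have := hW m (by omega)
      omega

lemma alpha_insertPeak (hi : i ≤ 2 * N) (hw : ∀ q < i, extendWord w q = true) (l : ℕ) :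
    alpha (N + 1) (insertPeak i w) (l + 1) =
      #{m ∈ range (2 * N + 1) | i ≤ m ∧ upCount N w m + l = m} - 1 := by
  rw [alpha]
  congr 1
  symm
  rw [← card_map (addRightEmbedding 2)]
  congr 1
  ext m
  simp only [mem_filter, mem_range, mem_map, addRightEmbedding_apply]
  constructor
  · rintro ⟨m, ⟨hm, him, he⟩, rfl⟩
    rw [upCount_insertPeak_add_two hi him]
    omega
  · rintro ⟨hm, he⟩
    have hm2 : i + 2 ≤ m := by
      by_contra h
      have : upCount (N + 1) (insertPeak i w) m = m :=
        (upCount_eq_self_iff _).2 fun q hq => extendWord_insertPeak_of_le hi hw (by omega)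
      omega
    obtain ⟨m, rfl⟩ := Nat.exists_eq_add_of_le' (show 2 ≤ m by omega)
    rw [upCount_insertPeak_add_two hi (by omega)] at he
    exact ⟨m, ⟨by omega, by omega, by omega⟩, rfl⟩

lemma alpha_succ_insertPeak (hi : i ≤ 2 * N) (hw : ∀ q < i, extendWord w q = true) {l : ℕ}
    (hl : 1 ≤ l) : alpha (N + 1) (insertPeak i w) (l + 1) = alpha N w l := by
  rw [alpha_insertPeak hi hw, alpha]
  congr 2
  refine filter_congr fun m _ => ⟨And.right, fun he => ⟨?_, he⟩⟩
  by_contra h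
  have : upCount N w m = m := (upCount_eq_self_iff w).2 fun q hq => hw q (by omega)
  omega

lemma alpha_one_insertPeak (hi : i ≤ 2 * N) {k : ℕ} (hk : k + i < 2 * N)
    (hw : startsWithUps N (k + i) w) : alpha (N + 1) (insertPeak i w) 1 = k := by
  have hup : ∀ q < i, extendWord w q = true := fun q hq =>
    ((startsWithUps_iff hk).1 hw).1 q (by omega)
  have h := alpha_insertPeak hi hup 0
  simp only [zero_add, add_zero] at h
  have hset : ({m ∈ range (2 * N + 1) | i ≤ m ∧ upCount N w m = m} : Finset ℕ) = Icc i (k + i) := by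
    ext m
    simp only [mem_filter, mem_range, mem_Icc, upCount_eq_self_iff_of_startsWithUps hk hw]
    omega
  rw [h, hset, Nat.card_Icc]
  omega

end Peaks

section Recursion

open Classical in
noncomputable def dyckPathsStartingWith (n i : ℕ) : Finset (Fin (2 * n) → Bool) :=
  (dyckPaths n).filter (fun w => startsWithUps n i w)

@[simp]
lemma mem_dyckPathsStartingWith {n i : ℕ} {w : Fin (2 * n) → Bool} :
    w ∈ dyckPathsStartingWith n i ↔ IsDyckPath n w ∧ startsWithUps n i w := by
  simp [dyckPathsStartingWith, dyckPaths]

variable {N i : ℕ}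

lemma insertPeak_mem_dyckPathsStartingWith {k : ℕ} (hki : k + i ≤ N) (hN : 1 ≤ N)
    {w : Fin (2 * N) → Bool} (hw : w ∈ dyckPathsStartingWith N (k + i)) :
    insertPeak i w ∈ dyckPathsStartingWith (N + 1) (i + 1) := by
  obtain ⟨hdyck, hstart⟩ := mem_dyckPathsStartingWith.1 hw
  have hup := ((startsWithUps_iff (by omega)).1 hstart).1
  exact mem_dyckPathsStartingWith.2 ⟨(isDyckPath_insertPeak_iff (by omega)).2 hdyck,
    startsWithUps_insertPeak (by omega) fun q hq => hup q (by omega)⟩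

lemma erasePeak_mem_dyckPathsStartingWith (hN : 1 ≤ N) (hi : i ≤ N)
    {w : Fin (2 * (N + 1)) → Bool} (hw : w ∈ dyckPathsStartingWith (N + 1) (i + 1)) :
    alpha (N + 1) w 1 + i ≤ N ∧
      erasePeak i w ∈ dyckPathsStartingWith N (alpha (N + 1) w 1 + i) := by
  obtain ⟨hdyck, hstart⟩ := mem_dyckPathsStartingWith.1 hw
  have hrec : insertPeak i (erasePeak i w) = w := insertPeak_erasePeak (by omega) hstart
  have hdyck' : IsDyckPath N (erasePeak i w) :=
    (isDyckPath_insertPeak_iff (by omega)).1 (hrec ▸ hdyck)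
  obtain ⟨i₀, hi₀⟩ := exists_startsWithUps hN hdyck'
  have hi₀N := le_of_startsWithUps hN hdyck' hi₀
  have hii₀ : i ≤ i₀ := by
    by_contra h
    have := ((startsWithUps_iff (by omega)).1 hi₀).2
    rw [extendWord_erasePeak_of_lt (by omega) hstart (by omega)] at this
    contradiction
  obtain ⟨k, rfl⟩ := Nat.exists_eq_add_of_le' hii₀
  have hα : alpha (N + 1) w 1 = k := by
    rw [← hrec]
    exact alpha_one_insertPeak (by omega) (by omega) hi₀
  rw [hα]
  exact ⟨hi₀N, mem_dyckPathsStartingWith.2 ⟨hdyck', hi₀⟩⟩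

lemma alpha_succ_of_mem_dyckPathsStartingWith (hi : i ≤ N)
    {w : Fin (2 * (N + 1)) → Bool} (hw : w ∈ dyckPathsStartingWith (N + 1) (i + 1)) {l : ℕ}
    (hl : 1 ≤ l) : alpha (N + 1) w (l + 1) = alpha N (erasePeak i w) l := by
  have hstart := (mem_dyckPathsStartingWith.1 hw).2
  conv_lhs => rw [← insertPeak_erasePeak (by omega) hstart]
  exact alpha_succ_insertPeak (by omega)
    (fun q hq => extendWord_erasePeak_of_lt (by omega) hstart hq) hl

theorem sum_dyckPathsStartingWith_succ {M : Type*} [AddCommMonoid M] (hN : 1 ≤ N) (hi : i ≤ N)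
    (f : ℕ → (Fin (2 * N) → Bool) → M) :
    ∑ w ∈ dyckPathsStartingWith (N + 1) (i + 1), f (alpha (N + 1) w 1) (erasePeak i w) =
      ∑ k ∈ range (N - i + 1), ∑ w ∈ dyckPathsStartingWith N (k + i), f k w := by
  rw [sum_sigma']
  refine sum_bij' (fun w _ => ⟨alpha (N + 1) w 1, erasePeak i w⟩) (fun p _ => insertPeak i p.2)
    ?_ ?_ ?_ ?_ fun _ _ => rfl
  · intro w hw
    obtain ⟨hle, hmem⟩ := erasePeak_mem_dyckPathsStartingWith hN hi hw
    exact mem_sigma.2 ⟨mem_range.2 (by dsimp only; omega), hmem⟩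
  · rintro ⟨k, w⟩ hkw
    obtain ⟨hk, hw⟩ := mem_sigma.1 hkw
    rw [mem_range] at hk
    exact insertPeak_mem_dyckPathsStartingWith (by omega) hN hw
  · intro w hw
    exact insertPeak_erasePeak (by omega) (mem_dyckPathsStartingWith.1 hw).2
  · rintro ⟨k, w⟩ hkw
    obtain ⟨hk, hw⟩ := mem_sigma.1 hkw
    rw [mem_range] at hk
    dsimp only at hk hw ⊢
    rw [alpha_one_insertPeak (by omega) (by omega) (mem_dyckPathsStartingWith.1 hw).2,
      erasePeak_insertPeak (by omega)]

end Recursion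

/-- equation (17) of the paper: for `n ≥ 2` and `1 ≤ j ≤ n`,
`P_n^{(j)}(y_1,…,y_{n-1}) = Σ_{k=0}^{n-j} (y_1^k/k!) · P_{n-1}^{(k+j-1)}(y_2,…,y_{n-1})`
(with the convention `P_m^{(0)} = 0` for `m ≥ 1`, which holds automatically here since no
Dyck path of positive length starts with a down-step). -/
theorem PpolyUp_recursion (n j : ℕ) (hn : 2 ≤ n) (hj1 : 1 ≤ j) (hjn : j ≤ n) (y : ℕ → ℝ) :
    PpolyUp n j y
      = ∑ k ∈ Finset.range (n - j + 1),
          y 1 ^ k / (Nat.factorial k) * PpolyUp (n - 1) (k + j - 1) (fun i => y (i + 1)) := by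
  obtain ⟨N, rfl⟩ : ∃ N, n = N + 1 := ⟨n - 1, by omega⟩
  obtain ⟨i, rfl⟩ : ∃ i, j = i + 1 := ⟨j - 1, by omega⟩
  let F : ℕ → (Fin (2 * N) → Bool) → ℝ := fun k v =>
    y 1 ^ k / k.factorial * ∏ l ∈ Ico 1 N, y (l + 1) ^ alpha N v l / (alpha N v l).factorial
  have hterm : ∀ w ∈ dyckPathsStartingWith (N + 1) (i + 1),
      ∏ l ∈ Ico 1 (N + 1), y l ^ alpha (N + 1) w l / (alpha (N + 1) w l).factorial =
        F (alpha (N + 1) w 1) (erasePeak i w) := by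
    intro w hw
    rw [prod_eq_prod_Ico_succ_bot (by omega), ← prod_Ico_add']
    congr 1
    refine prod_congr rfl fun l hl => ?_
    rw [alpha_succ_of_mem_dyckPathsStartingWith (by omega) hw (mem_Ico.1 hl).1]
  change ∑ w ∈ dyckPathsStartingWith (N + 1) (i + 1), _ = _
  rw [sum_congr rfl hterm, sum_dyckPathsStartingWith_succ (by omega) (by omega)]
  simp only [F, Nat.add_sub_add_right, Nat.add_sub_cancel, ← Nat.add_assoc, PpolyUp, mul_sum]
  rfl
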